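/- arXiv:1208.4319 — 4 statements merged into one kernel-verified Lean document; each statement's English description precedes it below -/
import Mathlib

section
/- Rademacher's theorem: every graph with n vertices and ⌊n²/4⌋ + 1 edges contains at least ⌊n/2⌋ triangles. -/
open Finset
namespace Rad
variable {V : Type} [Fintype V] [DecidableEq V] (G : SimpleGraph V) [DecidableRel G.Adj]

instance idr (s : Set V) [DecidablePred (· ∈ s)] : DecidableRel (G.induce s).Adj :=
  fun a b => inferInstanceAs (Decidable (G.Adj a b))


lemma deg_split (s : Finset V) (v : V) :
    G.degree v = #(s.filter (G.Adj v)) + #(sᶜ.filter (G.Adj v)) := by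
  rw [SimpleGraph.degree, SimpleGraph.neighborFinset_eq_filter, ← Finset.union_compl s,
    filter_union, card_union_of_disjoint]
  exact disjoint_filter_filter disjoint_compl_right

lemma cross_symm (s : Finset V) :
    ∑ v ∈ s, #(sᶜ.filter (G.Adj v)) = ∑ w ∈ sᶜ, #(s.filter (G.Adj w)) := by
  simp only [card_filter]
  rw [Finset.sum_comm]
  congr 1; ext w; congr 1; ext v
  simp [G.adj_comm]

lemma induced_degree (R : Finset V) (w : ↥(R : Set V)) :
    (G.induce (R : Set V)).degree w = #(R.filter (G.Adj ↑w)) := by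
  rw [SimpleGraph.degree, SimpleGraph.neighborFinset_eq_filter]
  refine Finset.card_bij (fun u _ => (u : V)) ?_ ?_ ?_
  · rintro ⟨u, hu⟩ h; simp only [mem_filter, mem_univ, true_and] at h
    exact mem_filter.2 ⟨hu, h⟩
  · rintro ⟨u, _⟩ _ ⟨u', _⟩ _ h; exact Subtype.ext h
  · intro x hx; simp only [mem_filter] at hx
    exact ⟨⟨x, hx.1⟩, mem_filter.2 ⟨mem_univ _, hx.2⟩, rfl⟩

lemma induced_handshake (R : Finset V) :
    ∑ w ∈ R, #(R.filter (G.Adj w)) = 2 * #(G.induce (R : Set V)).edgeFinset := by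
  rw [← SimpleGraph.sum_degrees_eq_twice_card_edges]
  rw [← Finset.sum_coe_sort R (fun w => #(R.filter (G.Adj w)))]
  congr 1
  ext w
  rw [induced_degree]

lemma edge_split (s : Finset V) :
    2 * #G.edgeFinset = (∑ v ∈ s, #(s.filter (G.Adj v)))
      + 2 * (∑ w ∈ sᶜ, #(s.filter (G.Adj w)))
      + 2 * #(G.induce ((sᶜ : Finset V) : Set V)).edgeFinset := by
  rw [← SimpleGraph.sum_degrees_eq_twice_card_edges, ← Finset.sum_add_sum_compl s]
  have h1 : ∑ v ∈ s, G.degree v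
      = (∑ v ∈ s, #(s.filter (G.Adj v))) + ∑ v ∈ s, #(sᶜ.filter (G.Adj v)) := by
    rw [← Finset.sum_add_distrib]; exact Finset.sum_congr rfl fun v _ => deg_split G s v
  have h2 : ∑ w ∈ sᶜ, G.degree w
      = (∑ w ∈ sᶜ, #(s.filter (G.Adj w))) + ∑ w ∈ sᶜ, #(sᶜ.filter (G.Adj w)) := by
    rw [← Finset.sum_add_distrib]; exact Finset.sum_congr rfl fun w _ => deg_split G s w
  rw [h1, h2, cross_symm, induced_handshake G sᶜ]
  ring



lemma ind_cliques (R : Finset V) :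
    #((G.induce (R : Set V)).cliqueFinset 3)
      ≤ #((G.cliqueFinset 3).filter (· ⊆ R)) := by
  apply Finset.card_le_card_of_injOn
    (fun t => t.map (Function.Embedding.subtype (· ∈ (R : Set V))))
  · intro t ht
    rw [mem_coe, SimpleGraph.mem_cliqueFinset_iff] at ht
    refine mem_filter.2 ⟨SimpleGraph.mem_cliqueFinset_iff.2 ⟨?_, by simp [ht.2]⟩, ?_⟩
    · rintro a ha b hb hab
      simp only [coe_map, Set.mem_image, mem_coe] at ha hb
      obtain ⟨x, hx, rfl⟩ := ha; obtain ⟨y, hy, rfl⟩ := hb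
      exact ht.1 hx hy (fun h => hab (by rw [h]))
    · intro x hx
      simp only [mem_map, Function.Embedding.coe_subtype] at hx
      obtain ⟨⟨u, hu⟩, _, rfl⟩ := hx
      exact hu
  · intro a _ b _ h
    exact Finset.map_injective _ h

lemma two_in_cliques (s : Finset V) (hs : G.IsNClique 3 s) :
    ∑ w ∈ sᶜ, (#(s.filter (G.Adj w)) - 1)
      ≤ #((G.cliqueFinset 3).filter (fun t => #(t ∩ s) = 2)) := by
  have key : ∑ w ∈ sᶜ, (#(s.filter (G.Adj w)) - 1)
      ≤ ∑ w ∈ sᶜ, (#(s.filter (G.Adj w))).choose 2 := by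
    refine Finset.sum_le_sum fun w _ => ?_
    have h3 : #(s.filter (G.Adj w)) ≤ 3 := by
      calc #(s.filter (G.Adj w)) ≤ #s := card_le_card (filter_subset _ _)
      _ = 3 := hs.2
    interval_cases h : #(s.filter (G.Adj w)) <;> decide
  refine key.trans ?_
  have hrw : ∑ w ∈ sᶜ, (#(s.filter (G.Adj w))).choose 2
      = #(sᶜ.sigma fun w => (s.filter (G.Adj w)).powersetCard 2) := by
    rw [Finset.card_sigma]
    exact Finset.sum_congr rfl fun w _ => (Finset.card_powersetCard 2 _).symm
  rw [hrw]
  apply Finset.card_le_card_of_injOn (fun p => insert p.1 p.2)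
  · rintro ⟨w, pr⟩ hp
    rw [mem_coe, mem_sigma] at hp
    obtain ⟨hw, hpr⟩ := hp
    rw [mem_powersetCard] at hpr
    obtain ⟨hsub, hcard⟩ := hpr
    have hws : w ∉ s := by simpa using hw
    have hprs : pr ⊆ s := hsub.trans (filter_subset _ _)
    have hwpr : w ∉ pr := fun h => hws (hprs h)
    have hinter : insert w pr ∩ s = pr := by
      apply Finset.Subset.antisymm
      · intro x hx
        rw [mem_inter, mem_insert] at hx
        rcases hx.1 with rfl | h
        · exact absurd hx.2 hws
        · exact h
      · intro x hx
        exact mem_inter.2 ⟨mem_insert_of_mem hx, hprs hx⟩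
    refine mem_filter.2 ⟨SimpleGraph.mem_cliqueFinset_iff.2 ⟨?_, ?_⟩, by rw [hinter, hcard]⟩
    · rintro a ha b hb hab
      simp only [coe_insert, Set.mem_insert_iff, mem_coe] at ha hb
      rcases ha with rfl | ha <;> rcases hb with rfl | hb
      · exact absurd rfl hab
      · exact (mem_filter.1 (hsub hb)).2
      · exact ((mem_filter.1 (hsub ha)).2).symm
      · exact hs.1 (hprs ha) (hprs hb) hab
    · rw [Finset.card_insert_of_notMem hwpr, hcard]
  · rintro ⟨w, pr⟩ hp ⟨w', pr'⟩ hp' heq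
    simp only [mem_coe, mem_sigma, mem_powersetCard] at hp hp'
    have hws : w ∉ s := by simpa using hp.1
    have hw's : w' ∉ s := by simpa using hp'.1
    have hprs : pr ⊆ s := hp.2.1.trans (filter_subset _ _)
    have hpr's : pr' ⊆ s := hp'.2.1.trans (filter_subset _ _)
    simp only at heq
    have hww' : w = w' := by
      have : w ∈ insert w' pr' := heq ▸ mem_insert_self w pr
      rcases mem_insert.1 this with rfl | h
      · rfl
      · exact absurd (hpr's h) hws
    subst hww'
    have : pr = pr' := by
      have h1 : w ∉ pr := fun h => hws (hprs h)
      have h2 : w ∉ pr' := fun h => hws (hpr's h)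
      rw [← Finset.erase_insert h1, ← Finset.erase_insert h2, heq]
    simp [this]





lemma count_comb (s : Finset V) (hs : G.IsNClique 3 s) :
    #((G.induce ((sᶜ : Finset V) : Set V)).cliqueFinset 3)
      + (∑ w ∈ sᶜ, (#(s.filter (G.Adj w)) - 1)) + 1 ≤ #(G.cliqueFinset 3) := by
  classical
  set T := G.cliqueFinset 3 with hT
  have hA := ind_cliques G sᶜ
  have hB := two_in_cliques G s hs
  have hC : 1 ≤ #(T.filter (· = s)) := by
    refine Finset.card_pos.2 ⟨s, mem_filter.2 ⟨?_, rfl⟩⟩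
    exact SimpleGraph.mem_cliqueFinset_iff.2 hs
  have hsub : (T.filter (· ⊆ sᶜ)) ∪ (T.filter (fun t => #(t ∩ s) = 2))
      ∪ (T.filter (· = s)) ⊆ T := by
    intro t ht
    simp only [mem_union, mem_filter] at ht
    rcases ht with (h | h) | h <;> exact h.1
  have hd1 : Disjoint (T.filter (· ⊆ sᶜ)) (T.filter (fun t => #(t ∩ s) = 2)) := by
    rw [Finset.disjoint_left]
    intro t ht ht'
    rw [mem_filter] at ht ht'
    have : t ∩ s = ∅ := by
      rw [← Finset.disjoint_iff_inter_eq_empty]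
      exact Finset.disjoint_left.2 fun a hat has => absurd has (by simpa using ht.2 hat)
    rw [this] at ht'; simp at ht'
  have hd2 : Disjoint ((T.filter (· ⊆ sᶜ)) ∪ (T.filter (fun t => #(t ∩ s) = 2)))
      (T.filter (· = s)) := by
    rw [Finset.disjoint_left]
    intro t ht ht'
    rw [mem_filter] at ht'
    obtain ⟨-, rfl⟩ := ht'
    simp only [mem_union, mem_filter] at ht
    rcases ht with ⟨-, h⟩ | ⟨-, h⟩
    · have hv : ∃ v, v ∈ t := by
        refine Finset.card_pos.1 ?_
        rw [hs.2]; norm_num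
      obtain ⟨v, hv⟩ := hv
      exact absurd hv (by simpa using h hv)
    · rw [Finset.inter_self, hs.2] at h; norm_num at h
  calc #((G.induce ((sᶜ : Finset V) : Set V)).cliqueFinset 3)
      + (∑ w ∈ sᶜ, (#(s.filter (G.Adj w)) - 1)) + 1
      ≤ #(T.filter (· ⊆ sᶜ)) + #(T.filter (fun t => #(t ∩ s) = 2))
        + #(T.filter (· = s)) := by
        gcongr
    _ = #((T.filter (· ⊆ sᶜ)) ∪ (T.filter (fun t => #(t ∩ s) = 2))
        ∪ (T.filter (· = s))) := by
        rw [card_union_of_disjoint hd2, card_union_of_disjoint hd1]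
    _ ≤ #T := card_le_card hsub

lemma count_v (v : V) (s : Finset V) (hs : G.IsNClique 3 s) (hv : v ∈ s) :
    #((G.induce ((({v}ᶜ : Finset V)) : Set V)).cliqueFinset 3) + 1
      ≤ #(G.cliqueFinset 3) := by
  classical
  set T := G.cliqueFinset 3 with hT
  have hA := ind_cliques G {v}ᶜ
  have hC : 1 ≤ #(T.filter (· = s)) := by
    refine Finset.card_pos.2 ⟨s, mem_filter.2 ⟨?_, rfl⟩⟩
    exact SimpleGraph.mem_cliqueFinset_iff.2 hs
  have hd : Disjoint (T.filter (· ⊆ {v}ᶜ)) (T.filter (· = s)) := by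
    rw [Finset.disjoint_left]
    intro t ht ht'
    rw [mem_filter] at ht ht'
    obtain ⟨-, rfl⟩ := ht'
    simpa using ht.2 hv
  have hsub : (T.filter (· ⊆ {v}ᶜ)) ∪ (T.filter (· = s)) ⊆ T := by
    intro t ht
    simp only [mem_union, mem_filter] at ht
    rcases ht with h | h <;> exact h.1
  calc #((G.induce ((({v}ᶜ : Finset V)) : Set V)).cliqueFinset 3) + 1
      ≤ #(T.filter (· ⊆ {v}ᶜ)) + #(T.filter (· = s)) := by gcongr
    _ = #((T.filter (· ⊆ {v}ᶜ)) ∪ (T.filter (· = s))) :=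
        (card_union_of_disjoint hd).symm
    _ ≤ #T := card_le_card hsub




lemma ar1 (n : ℕ) (h : 2 ≤ n) : n^2/4 = (n-2)^2/4 + (n-1) := by
  obtain ⟨q, rfl | rfl⟩ := Nat.even_or_odd' n
  · obtain ⟨p, rfl⟩ : ∃ p, q = p + 1 := ⟨q-1, by omega⟩
    have e1 : (2*(p+1))^2 = 4*(p^2+2*p+1) + 0 := by ring
    have e2 : (2*(p+1)-2)^2 = 4*(p^2) + 0 := by
      rw [show 2*(p+1)-2 = 2*p by omega]; ring
    rw [e1, e2]; generalize p^2 = A; omega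
  · obtain ⟨p, rfl⟩ : ∃ p, q = p + 1 := ⟨q-1, by omega⟩
    have e1 : (2*(p+1)+1)^2 = 4*(p^2+3*p+2) + 1 := by ring
    have e2 : (2*(p+1)+1-2)^2 = 4*(p^2+p) + 1 := by
      rw [show 2*(p+1)+1-2 = 2*p+1 by omega]; ring
    rw [e1, e2]; generalize p^2 = A; omega

lemma ar2 (n : ℕ) (h : 4 ≤ n) : n^2/4 = (n-3)^2/4 + n + (n/2 - 2) := by
  obtain ⟨q, rfl | rfl⟩ := Nat.even_or_odd' n
  · obtain ⟨p, rfl⟩ : ∃ p, q = p + 2 := ⟨q-2, by omega⟩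
    have e1 : (2*(p+2))^2 = 4*(p^2+4*p+4) + 0 := by ring
    have e2 : (2*(p+2)-3)^2 = 4*(p^2+p) + 1 := by
      rw [show 2*(p+2)-3 = 2*p+1 by omega]; ring
    rw [e1, e2]; generalize p^2 = A; omega
  · obtain ⟨p, rfl⟩ : ∃ p, q = p + 2 := ⟨q-2, by omega⟩
    have e1 : (2*(p+2)+1)^2 = 4*(p^2+5*p+6) + 1 := by ring
    have e2 : (2*(p+2)+1-3)^2 = 4*(p^2+2*p+1) + 0 := by
      rw [show 2*(p+2)+1-3 = 2*(p+1) by omega]; ring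
    rw [e1, e2]; generalize p^2 = A; omega

lemma ar3 (n : ℕ) (h : 1 ≤ n) : n^2/4 = (n-1)^2/4 + n/2 := by
  obtain ⟨q, rfl | rfl⟩ := Nat.even_or_odd' n
  · obtain ⟨p, rfl⟩ : ∃ p, q = p + 1 := ⟨q-1, by omega⟩
    have e1 : (2*(p+1))^2 = 4*(p^2+2*p+1) + 0 := by ring
    have e2 : (2*(p+1)-1)^2 = 4*(p^2+p) + 1 := by
      rw [show 2*(p+1)-1 = 2*p+1 by omega]; ring
    rw [e1, e2]; generalize p^2 = A; omega
  · have e1 : (2*q+1)^2 = 4*(q^2+q) + 1 := by ring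
    have e2 : (2*q+1-1)^2 = 4*(q^2) + 0 := by
      rw [show 2*q+1-1 = 2*q by omega]; ring
    rw [e1, e2]; generalize q^2 = A; omega

lemma mantel (n : ℕ) : ∀ (V : Type) [Fintype V] [DecidableEq V]
    (G : SimpleGraph V) [DecidableRel G.Adj], Fintype.card V = n →
    G.CliqueFree 3 → #G.edgeFinset ≤ n^2/4 := by
  induction n using Nat.strong_induction_on with
  | _ n ih =>
  intro V _ _ G _ hcard hfree
  by_cases hne : G.edgeFinset.Nonempty
  · obtain ⟨e, he⟩ := hne
    rw [SimpleGraph.mem_edgeFinset] at he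
    induction e using Sym2.ind with
    | _ u v =>
    rw [SimpleGraph.mem_edgeSet] at he
    have hne' : u ≠ v := G.ne_of_adj he
    set s : Finset V := {u, v} with hsdef
    have hcs : #s = 2 := card_pair hne'
    have hn2 : 2 ≤ n := by
      rw [← hcard, ← Finset.card_univ]
      calc 2 = #s := hcs.symm
        _ ≤ #(univ : Finset V) := card_le_card (subset_univ s)
    have hsplit := edge_split G s
    -- bound inner sum
    have hA : ∑ x ∈ s, #(s.filter (G.Adj x)) ≤ 2 := by
      have hb : ∀ x, #(s.filter (G.Adj x)) ≤ 2 := by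
        intro x; calc #(s.filter (G.Adj x)) ≤ #s := card_le_card (filter_subset _ _)
          _ = 2 := hcs
      have hloop : ∀ x ∈ s, #(s.filter (G.Adj x)) ≤ 1 := by
        intro x hx
        have : s.filter (G.Adj x) ⊆ s.erase x := by
          intro y hy
          rw [mem_filter] at hy
          exact mem_erase.2 ⟨fun hxy => G.loopless.irrefl x (hxy ▸ hy.2), hy.1⟩
        calc #(s.filter (G.Adj x)) ≤ #(s.erase x) := card_le_card this
          _ = #s - 1 := card_erase_of_mem hx
          _ = 1 := by rw [hcs]
      calc ∑ x ∈ s, #(s.filter (G.Adj x)) ≤ ∑ x ∈ s, 1 := sum_le_sum hloop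
        _ = 2 := by rw [sum_const, hcs]; simp
    -- bound cross
    have hcross : ∑ w ∈ sᶜ, #(s.filter (G.Adj w)) ≤ n - 2 := by
      have h1 : ∀ w ∈ sᶜ, #(s.filter (G.Adj w)) ≤ 1 := by
        intro w hw
        rw [Finset.card_le_one]
        intro a ha b hb
        rw [mem_filter, hsdef, mem_insert, mem_singleton] at ha hb
        have hwu : w ≠ u := by
          intro h; subst h; simp [hsdef] at hw
        have hwv : w ≠ v := by
          intro h; subst h; simp [hsdef] at hw
        obtain ⟨ha1, ha2⟩ := ha
        obtain ⟨hb1, hb2⟩ := hb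
        have key : ¬(G.Adj w u ∧ G.Adj w v) := fun ⟨h1, h2⟩ =>
          (hfree ({u, v, w} : Finset V))
            (SimpleGraph.is3Clique_triple_iff.2 ⟨he, h1.symm, h2.symm⟩)
        rcases ha1 with h | h <;> rcases hb1 with h' | h'
        · rw [h, h']
        · exact absurd ⟨by rw [← h]; exact ha2, by rw [← h']; exact hb2⟩ key
        · exact absurd ⟨by rw [← h']; exact hb2, by rw [← h]; exact ha2⟩ key
        · rw [h, h']
      calc ∑ w ∈ sᶜ, #(s.filter (G.Adj w)) ≤ ∑ w ∈ sᶜ, 1 := sum_le_sum h1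
        _ = #sᶜ := by simp
        _ = n - 2 := by rw [card_compl, hcs, hcard]
    -- induced graph
    have hfree' : (G.induce ((sᶜ : Finset V) : Set V)).CliqueFree 3 :=
      hfree.comap (SimpleGraph.Embedding.induce _).isContained
    have hcard' : Fintype.card ↥((sᶜ : Finset V) : Set V) = n - 2 := by
      have h0 : Fintype.card ↥((sᶜ : Finset V) : Set V) = #sᶜ := Fintype.card_coe _
      rw [h0, card_compl, hcs, hcard]
    have hER := ih (n-2) (by omega) _ (G.induce ((sᶜ : Finset V) : Set V)) hcard' hfree'
    have har := ar1 n hn2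
    generalize hX : n^2/4 = X at har ⊢
    generalize hY : (n-2)^2/4 = Y at har hER
    omega
  · rw [Finset.not_nonempty_iff_eq_empty] at hne
    simp [hne]

lemma aux (n : ℕ) : ∀ (V : Type) [Fintype V] [DecidableEq V]
    (G : SimpleGraph V) [DecidableRel G.Adj], Fintype.card V = n →
    n^2/4 + 1 ≤ #G.edgeFinset → n/2 ≤ #(G.cliqueFinset 3) := by
  induction n using Nat.strong_induction_on with
  | _ n ih =>
  intro V _ _ G _ hcard hE
  have hncf : ¬ G.CliqueFree 3 := by
    intro hcf
    have := mantel n V G hcard hcf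
    omega
  rw [SimpleGraph.CliqueFree] at hncf; push_neg at hncf
  obtain ⟨s, hs⟩ := hncf
  have hs3 : #s = 3 := hs.2
  have hsT : s ∈ G.cliqueFinset 3 := SimpleGraph.mem_cliqueFinset_iff.2 hs
  by_cases hn4 : n < 4
  · have h1 : 1 ≤ #(G.cliqueFinset 3) := card_pos.2 ⟨s, hsT⟩
    omega
  push_neg at hn4
  have hcount := count_comb G s hs
  set b := ∑ w ∈ sᶜ, (#(s.filter (G.Adj w)) - 1) with hbdef
  by_cases hb1 : n/2 ≤ b + 1
  · omega
  push_neg at hb1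
  -- helper: within-s filter bound
  have hloop : ∀ x ∈ s, #(s.filter (G.Adj x)) ≤ 2 := by
    intro x hx
    have hsub : s.filter (G.Adj x) ⊆ s.erase x := by
      intro y hy
      rw [mem_filter] at hy
      exact mem_erase.2 ⟨fun hxy => G.loopless.irrefl x (hxy ▸ hy.2), hy.1⟩
    calc #(s.filter (G.Adj x)) ≤ #(s.erase x) := card_le_card hsub
      _ = #s - 1 := card_erase_of_mem hx
      _ = 2 := by rw [hs3]
  by_cases hb0 : b = 0
  · -- case 3 : delete a low-degree vertex of the triangle
    have hble : ∀ w ∈ sᶜ, #(s.filter (G.Adj w)) ≤ 1 := by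
      intro w hw
      by_contra hgt
      push_neg at hgt
      have h1 : 1 ≤ #(s.filter (G.Adj w)) - 1 := by omega
      have h2 : #(s.filter (G.Adj w)) - 1 ≤ b :=
        Finset.single_le_sum (f := fun w => #(s.filter (G.Adj w)) - 1)
          (fun _ _ => Nat.zero_le _) hw
      omega
    have hcross0 : ∑ v ∈ s, #(sᶜ.filter (G.Adj v)) ≤ n - 3 := by
      rw [cross_symm]
      calc ∑ w ∈ sᶜ, #(s.filter (G.Adj w)) ≤ ∑ w ∈ sᶜ, 1 := sum_le_sum hble
        _ = #sᶜ := by simp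
        _ = n - 3 := by rw [card_compl, hs3, hcard]
    obtain ⟨v, hvs, hvmin⟩ := Finset.exists_min_image s
      (fun v => #(sᶜ.filter (G.Adj v))) ⟨_, (card_pos.1 (by rw [hs3]; norm_num)).choose_spec⟩
    have h3v : 3 * #(sᶜ.filter (G.Adj v)) ≤ n - 3 := by
      calc 3 * #(sᶜ.filter (G.Adj v)) = ∑ _x ∈ s, #(sᶜ.filter (G.Adj v)) := by
            rw [sum_const, hs3, smul_eq_mul]
        _ ≤ ∑ x ∈ s, #(sᶜ.filter (G.Adj x)) := sum_le_sum fun x hx => hvmin x hx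
        _ ≤ n - 3 := hcross0
    have hdeg : G.degree v ≤ 2 + #(sᶜ.filter (G.Adj v)) := by
      rw [deg_split G s v]
      exact Nat.add_le_add_right (hloop v hvs) _
    have hdeg2 : 3 * G.degree v ≤ n + 3 := by omega
    have hsplit := edge_split G {v}
    have hA0 : ∑ x ∈ ({v} : Finset V), #(({v} : Finset V).filter (G.Adj x)) = 0 := by
      rw [sum_singleton, filter_singleton]
      simp [G.loopless.irrefl v]
    have hcrossv : ∑ w ∈ ({v} : Finset V)ᶜ, #(({v} : Finset V).filter (G.Adj w))
        ≤ G.degree v := by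
      have hterm : ∀ w, #(({v} : Finset V).filter (G.Adj w))
          = if G.Adj v w then 1 else 0 := by
        intro w
        rw [filter_singleton]
        by_cases h : G.Adj w v
        · simp [h, G.adj_comm v w]
        · have h' : ¬ G.Adj v w := fun hh => h hh.symm
          simp [h, h']
      calc ∑ w ∈ ({v} : Finset V)ᶜ, #(({v} : Finset V).filter (G.Adj w))
          ≤ ∑ w ∈ (univ : Finset V), #(({v} : Finset V).filter (G.Adj w)) :=
            sum_le_sum_of_subset (subset_univ _)
        _ = ∑ w ∈ (univ : Finset V), if G.Adj v w then 1 else 0 := by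
            exact sum_congr rfl fun w _ => hterm w
        _ = #(univ.filter (G.Adj v)) := by rw [← card_filter]
        _ = G.degree v := by
            rw [SimpleGraph.degree, SimpleGraph.neighborFinset_eq_filter]
    have hE' : (n-1)^2/4 + 1
        ≤ #(G.induce ((({v} : Finset V)ᶜ : Finset V) : Set V)).edgeFinset := by
      have har := ar3 n (by omega)
      have hdv : G.degree v ≤ n/2 := by omega
      generalize hX : n^2/4 = X at har hE
      generalize hY : (n-1)^2/4 = Y at har ⊢
      omega
    have hcard' : Fintype.card ↥((({v} : Finset V)ᶜ : Finset V) : Set V) = n - 1 := by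
      have h0 : Fintype.card ↥((({v} : Finset V)ᶜ : Finset V) : Set V)
          = #(({v} : Finset V)ᶜ) := Fintype.card_coe _
      rw [h0, card_compl, card_singleton, hcard]
    have hIH := ih (n-1) (by omega) _ (G.induce ((({v} : Finset V)ᶜ : Finset V) : Set V))
      hcard' hE'
    have hcv := count_v G v s hs hvs
    omega
  · -- case 2 : induct on the complement of the triangle
    have hsplit := edge_split G s
    have hA6 : ∑ x ∈ s, #(s.filter (G.Adj x)) ≤ 6 := by
      calc ∑ x ∈ s, #(s.filter (G.Adj x)) ≤ ∑ _x ∈ s, 2 := sum_le_sum hloop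
        _ = 6 := by rw [sum_const, hs3, smul_eq_mul]
    have hcrossb : ∑ w ∈ sᶜ, #(s.filter (G.Adj w)) ≤ (n-3) + b := by
      calc ∑ w ∈ sᶜ, #(s.filter (G.Adj w))
          ≤ ∑ w ∈ sᶜ, (1 + (#(s.filter (G.Adj w)) - 1)) :=
            sum_le_sum fun w _ => by omega
        _ = #sᶜ + b := by rw [sum_add_distrib, sum_const, smul_eq_mul, mul_one]
        _ = (n-3) + b := by rw [card_compl, hs3, hcard]
    have hE' : (n-3)^2/4 + 1 ≤ #(G.induce ((sᶜ : Finset V) : Set V)).edgeFinset := by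
      have har := ar2 n hn4
      generalize hX : n^2/4 = X at har hE
      generalize hY : (n-3)^2/4 = Y at har ⊢
      omega
    have hcard' : Fintype.card ↥((sᶜ : Finset V) : Set V) = n - 3 := by
      have h0 : Fintype.card ↥((sᶜ : Finset V) : Set V) = #sᶜ := Fintype.card_coe _
      rw [h0, card_compl, hs3, hcard]
    have hIH := ih (n-3) (by omega) _ (G.induce ((sᶜ : Finset V) : Set V)) hcard' hE'
    omega

end Rad

/-- **Rademacher's theorem**: every graph with `n` vertices and `⌊n²/4⌋ + 1` edges
contains at least `⌊n/2⌋` triangles. -/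
theorem rademacher (n : ℕ) (G : SimpleGraph (Fin n)) [DecidableRel G.Adj]
    (h : G.edgeFinset.card = n ^ 2 / 4 + 1) :
    n / 2 ≤ (G.cliqueFinset 3).card := by
  exact Rad.aux n (Fin n) G (Fintype.card_fin n) (le_of_eq h.symm)
end

section
/- For r ≥ 2 and F = K_{r+2} − e (the complete graph on r+2 vertices minus one edge), the number of copies of F in the graph obtained from the complete r-partite graph with parts of sizes n₁, …, n_r by adding one edge inside the first part equals ((n − n₁ − r + 1)/2) · ∏_{i=2}^{r} n_i, where n = n₁ + … + n_r. Equivalently, it equals (∑_{i=2}^r C(n_i,2) ∏_{2≤j≤r, j≠i} n_j). -/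
open Finset

/-- The number of copies of `F` in `H`: the number of subgraphs of `H`
isomorphic to `F`. -/
noncomputable def copyCount {α β : Type*} (F : SimpleGraph α) (H : SimpleGraph β) : ℕ :=
  Set.ncard {H' : H.Subgraph | Nonempty (H'.coe ≃g F)}

/-- `K_{r+2}` minus one edge. -/
def cliqueMinusEdge (r : ℕ) : SimpleGraph (Fin (r + 2)) :=
  (⊤ : SimpleGraph (Fin (r + 2))).deleteEdges {s(0, 1)}

/-!
Let `S` be the vertex set of a copy of `K_{r+2} − e` and `ab` its non-edge. Two vertices of one
part are adjacent only if they are `x, y`, so every pair of `S` inside a part is `ab` or `xy`.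
As `S` has `r + 2` vertices in `r` parts, pigeonhole on `S` minus `b` (resp. minus `x`) yields
such a pair avoiding `b` (resp. `x`): hence `x, y ∈ S` and `a, b` share a part `V_i`. Then
`i ≠ 1`, `S` meets `V_1` in `{x, y}`, `V_i` in `{a, b}` and every other part in exactly one
vertex, and the copy is induced. Conversely every such set spans a copy, so copies correspond to
a choice of `i ≠ 1`, a pair in `V_i` and one vertex in each remaining part.
-/

lemma cliqueMinusEdge_adj {r : ℕ} {a b : Fin (r + 2)} :
    (cliqueMinusEdge r).Adj a b ↔ a ≠ b ∧ s(a, b) ≠ s(0, 1) := by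
  simp [cliqueMinusEdge]

lemma Sym2.mk_eq_mk_iff_of_injective {α β : Type*} {f : α → β} (hf : Function.Injective f)
    {a b c d : α} : s(f a, f b) = s(f c, f d) ↔ s(a, b) = s(c, d) := by
  simp [hf.eq_iff]

lemma Sym2.mk_eq_of_mem_pair {β : Type*} [DecidableEq β] {p q c c' : β}
    (hc : c ∈ ({p, q} : Finset β)) (hc' : c' ∈ ({p, q} : Finset β)) (h : c ≠ c') :
    s(c, c') = s(p, q) := by
  simp only [mem_insert, mem_singleton] at hc hc'
  rcases hc with rfl | rfl <;> rcases hc' with rfl | rfl <;> simp_all [Sym2.eq_swap]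

namespace SimpleGraph.Subgraph

variable {V : Type*} {G : SimpleGraph V} {r : ℕ}

theorem nonempty_iso_cliqueMinusEdge_iff (H' : G.Subgraph) :
    Nonempty (H'.coe ≃g cliqueMinusEdge r) ↔
      ∃ S : Finset V, H'.verts = S ∧ #S = r + 2 ∧ ∃ a ∈ S, ∃ b ∈ S, a ≠ b ∧
        ∀ u ∈ S, ∀ v ∈ S, (H'.Adj u v ↔ u ≠ v ∧ s(u, v) ≠ s(a, b)) := by
  classical
  constructor
  · rintro ⟨φ⟩
    let w : Fin (r + 2) ↪ V := ⟨fun z => φ.symm z, Subtype.val_injective.comp φ.symm.injective⟩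
    have hw : ∀ z z', H'.Adj (w z) (w z') ↔ w z ≠ w z' ∧ s(w z, w z') ≠ s(w 0, w 1) := by
      intro z z'
      rw [w.injective.ne_iff]
      exact φ.symm.map_adj_iff.trans <| cliqueMinusEdge_adj.trans <|
        and_congr_right' (Sym2.mk_eq_mk_iff_of_injective w.injective).not.symm
    refine ⟨univ.map w, ?_, by simp, w 0, by simp, w 1, by simp, by simp, ?_⟩
    · ext v
      simpa [w] using ⟨fun hv => ⟨φ ⟨v, hv⟩, by simp⟩, by rintro ⟨z, rfl⟩; exact (φ.symm z).2⟩
    · simp only [mem_map, mem_univ, true_and]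
      rintro _ ⟨z, rfl⟩ _ ⟨z', rfl⟩
      exact hw z z'
  · rintro ⟨S, hverts, hcard, a, ha, b, hb, hab, hadj⟩
    obtain ⟨g, hg⟩ := exists_equiv_extend_of_card_eq (by simpa using hcard.symm)
      (s := {0, 1}) (f := fun z : Fin (r + 2) => if z = 0 then a else b)
      (by simp [insert_subset_iff, ha, hb]) (by simp [Set.InjOn, hab, hab.symm])
    have hg0 : (g 0 : V) = a := by simpa using hg 0
    have hg1 : (g 1 : V) = b := by simpa using hg 1
    let ψ : Fin (r + 2) ≃ H'.verts := g.trans (Equiv.subtypeEquivRight (by simp [hverts]))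
    refine ⟨Iso.symm ⟨ψ, fun {z z'} => ?_⟩⟩
    have hinj : Function.Injective fun z => (g z : V) := Subtype.val_injective.comp g.injective
    change H'.Adj (g z : V) (g z') ↔ _
    rw [cliqueMinusEdge_adj, hadj _ (g z).2 _ (g z').2, ← hg0, ← hg1, hinj.ne_iff]
    exact and_congr_right' (Sym2.mk_eq_mk_iff_of_injective hinj).not

end SimpleGraph.Subgraph

section CompleteMultipartitePlusEdge

variable {ι : Type*} {α : ι → Type*} {i₀ : ι} {x y : α i₀}

def completeMultipartitePlusEdge (α : ι → Type*) (i₀ : ι) (x y : α i₀) :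
    SimpleGraph (Σ i, α i) :=
  .completeMultipartiteGraph α ⊔ .fromEdgeSet {s(⟨i₀, x⟩, ⟨i₀, y⟩)}

lemma completeMultipartitePlusEdge_adj {u v : Σ i, α i} :
    (completeMultipartitePlusEdge α i₀ x y).Adj u v ↔
      u ≠ v ∧ (u.1 = v.1 → s(u, v) = s(⟨i₀, x⟩, ⟨i₀, y⟩)) := by
  by_cases h : u.1 = v.1
  · simp [completeMultipartitePlusEdge, h, and_comm]
  · simpa [completeMultipartitePlusEdge, h] using fun huv : u = v => h (congrArg Sigma.fst huv)

lemma Sigma.fst_eq_of_mem_mk {p q z : Σ i, α i} (hz : z ∈ s(p, q)) (hpq : p.1 = q.1) :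
    z.1 = p.1 := by
  rcases Sym2.mem_iff.1 hz with rfl | rfl
  exacts [rfl, hpq.symm]

noncomputable def partFiber (S : Finset (Σ i, α i)) (j : ι) : Finset (α j) :=
  S.preimage (Sigma.mk j) sigma_mk_injective.injOn

@[simp]
lemma mem_partFiber {S : Finset (Σ i, α i)} {j : ι} {c : α j} : c ∈ partFiber S j ↔ ⟨j, c⟩ ∈ S :=
  mem_preimage

lemma sigma_partFiber [DecidableEq ι] [Fintype ι] (S : Finset (Σ i, α i)) :
    univ.sigma (partFiber S) = S :=
  sigma_preimage_mk_of_subset S (subset_univ _)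

lemma induce_sigma_injective [Fintype ι] {G : SimpleGraph (Σ i, α i)} :
    Function.Injective fun g : ∀ j, Finset (α j) => (⊤ : G.Subgraph).induce ↑(univ.sigma g) := by
  intro g g' h
  have hS : univ.sigma g = univ.sigma g' := coe_inj.1 (congrArg SimpleGraph.Subgraph.verts h)
  funext j
  ext c
  simpa using congrArg (⟨j, c⟩ ∈ ·) hS

def SamePartPairsIn (S : Finset (Σ i, α i)) (A B : Sym2 (Σ i, α i)) : Prop :=
  ∀ u ∈ S, ∀ v ∈ S, u ≠ v → u.1 = v.1 → s(u, v) = A ∨ s(u, v) = B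

section SamePartPairsIn

variable {S : Finset (Σ i, α i)} {a b : Σ i, α i}

lemma SamePartPairsIn.mem_or_mem {A B : Sym2 (Σ i, α i)} (h : SamePartPairsIn S A B)
    {u v : Σ i, α i} (hu : u ∈ S) (hv : v ∈ S) (huv : u ≠ v) (hfst : u.1 = v.1) :
    (u ∈ A ∧ v ∈ A) ∨ (u ∈ B ∧ v ∈ B) := by
  rcases h u hu v hv huv hfst with rfl | rfl
  exacts [Or.inl ⟨Sym2.mem_mk_left u v, Sym2.mem_mk_right u v⟩,
    Or.inr ⟨Sym2.mem_mk_left u v, Sym2.mem_mk_right u v⟩]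

lemma samePartPairsIn_of_adj
    (hadj : ∀ u ∈ S, ∀ v ∈ S, u ≠ v → s(u, v) ≠ s(a, b) →
      (completeMultipartitePlusEdge α i₀ x y).Adj u v) :
    SamePartPairsIn S s(a, b) s(⟨i₀, x⟩, ⟨i₀, y⟩) := fun u hu v hv huv hfst =>
  or_iff_not_imp_left.2 fun hab =>
    (completeMultipartitePlusEdge_adj.1 (hadj u hu v hv huv hab)).2 hfst

lemma SamePartPairsIn.fst_ne (hxy : x ≠ y) (hb : b ∈ S)
    (h : SamePartPairsIn S s(a, b) s(⟨i₀, x⟩, ⟨i₀, y⟩)) (hx : ⟨i₀, x⟩ ∈ S) (hy : ⟨i₀, y⟩ ∈ S)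
    (hbxy : b ∉ s(⟨i₀, x⟩, ⟨i₀, y⟩)) (hab : a.1 = b.1) : a.1 ≠ i₀ := by
  intro ha₀
  have eq_a : ∀ z ∈ s(⟨i₀, x⟩, ⟨i₀, y⟩), z ∈ S → z = a := fun z hz hzS => by
    rcases h b hb z hzS (fun h => hbxy (h ▸ hz))
      (by rw [Sigma.fst_eq_of_mem_mk hz rfl]; exact hab.symm.trans ha₀) with h | h
    · exact Sym2.congr_right.1 (h.trans Sym2.eq_swap)
    · exact absurd (h ▸ Sym2.mem_mk_left b z) hbxy
  have := (eq_a _ (Sym2.mem_mk_left _ _) hx).trans (eq_a _ (Sym2.mem_mk_right _ _) hy).symm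
  exact hxy (by simpa using this)

lemma SamePartPairsIn.adj_iff (h : SamePartPairsIn S s(a, b) s(⟨i₀, x⟩, ⟨i₀, y⟩))
    (hab : a.1 = b.1) (ha₀ : a.1 ≠ i₀) {u v : Σ i, α i} (hu : u ∈ S) (hv : v ∈ S) :
    (completeMultipartitePlusEdge α i₀ x y).Adj u v ↔ u ≠ v ∧ s(u, v) ≠ s(a, b) := by
  rw [completeMultipartitePlusEdge_adj]
  refine and_congr_right fun huv => ⟨fun hxy hM => ha₀ ?_, fun hM hfst => ?_⟩
  · have hu' : u ∈ s(a, b) := hM ▸ Sym2.mem_mk_left u v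
    have hv' : v ∈ s(a, b) := hM ▸ Sym2.mem_mk_right u v
    have hab₀ := hM.symm.trans (hxy (by rw [Sigma.fst_eq_of_mem_mk hu' hab,
      Sigma.fst_eq_of_mem_mk hv' hab]))
    have ha' : a ∈ s((⟨i₀, x⟩ : Σ i, α i), ⟨i₀, y⟩) := hab₀ ▸ Sym2.mem_mk_left a b
    exact Sigma.fst_eq_of_mem_mk ha' rfl
  · exact (h u hu v hv huv hfst).resolve_left hM

variable [∀ i, DecidableEq (α i)]

lemma SamePartPairsIn.partFiber_base (h : SamePartPairsIn S s(a, b) s(⟨i₀, x⟩, ⟨i₀, y⟩))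
    (hx : ⟨i₀, x⟩ ∈ S) (hy : ⟨i₀, y⟩ ∈ S) (hab : a.1 = b.1) (ha₀ : a.1 ≠ i₀) :
    partFiber S i₀ = {x, y} := by
  ext c
  simp only [mem_partFiber, mem_insert, mem_singleton]
  refine ⟨fun hc => ?_, by rintro (rfl | rfl) <;> assumption⟩
  by_contra hcxy
  rcases h.mem_or_mem hc hx (by simp_all) rfl with ⟨hca, -⟩ | ⟨hc₀, -⟩
  · exact ha₀ (Sigma.fst_eq_of_mem_mk hca hab).symm
  · simp_all [Sym2.mem_iff]

lemma SamePartPairsIn.card_partFiber_self (h : SamePartPairsIn S s(a, b) s(⟨i₀, x⟩, ⟨i₀, y⟩))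
    (ha : a ∈ S) (hb : b ∈ S) (hab : a ≠ b) (hab1 : a.1 = b.1) (ha₀ : a.1 ≠ i₀) :
    #(partFiber S a.1) = 2 := by
  obtain ⟨i, c₀⟩ := a
  obtain ⟨i', c₁⟩ := b
  simp only at hab1
  subst hab1
  rw [card_eq_two]
  refine ⟨c₀, c₁, by simpa using hab, ?_⟩
  ext c
  simp only [mem_partFiber, mem_insert, mem_singleton]
  refine ⟨fun hc => ?_, by rintro (h | h) <;> rwa [h]⟩
  by_contra hc₀₁
  rcases h.mem_or_mem hc ha (by simp_all) rfl with ⟨hca, -⟩ | ⟨-, ha'⟩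
  · simp_all [Sym2.mem_iff]
  · exact ha₀ (Sigma.fst_eq_of_mem_mk ha' rfl)

variable [DecidableEq ι]

lemma exists_ne_fst_eq_of_card_lt {T : Finset (Σ i, α i)} {K : Finset ι}
    (hK : #K + #T < #S) (hS : ∀ v ∈ S, v.1 ∈ K) :
    ∃ u ∈ S, ∃ v ∈ S, u ≠ v ∧ u.1 = v.1 ∧ u ∉ T ∧ v ∉ T := by
  obtain ⟨u, hu, v, hv, huv, h⟩ := exists_ne_map_eq_of_card_lt_of_maps_to
    (s := S \ T) (t := K) (by have := le_card_sdiff T S; omega)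
    fun v hv => hS v (mem_sdiff.1 hv).1
  rw [mem_sdiff] at hu hv
  exact ⟨u, hu.1, v, hv.1, huv, h, hu.2, hv.2⟩

variable [Fintype ι]

lemma SamePartPairsIn.of_card (hcard : #S = Fintype.card ι + 2) (hb : b ∈ S)
    (h : SamePartPairsIn S s(a, b) s(⟨i₀, x⟩, ⟨i₀, y⟩)) :
    ⟨i₀, x⟩ ∈ S ∧ ⟨i₀, y⟩ ∈ S ∧ b ∉ s(⟨i₀, x⟩, ⟨i₀, y⟩) ∧ a.1 = b.1 := by
  have hS : ∀ T : Finset (Σ i, α i), #T = 1 → #(univ : Finset ι) + #T < #S := by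
    simp +contextual [hcard]
  obtain ⟨u, hu, v, hv, huv, hfst, hub, hvb⟩ :=
    exists_ne_fst_eq_of_card_lt (hS {b} (card_singleton b)) fun _ _ => mem_univ _
  have hbuv : b ∉ s(u, v) := by simp_all [Sym2.mem_iff, eq_comm]
  have huv₀ : s(u, v) = s(⟨i₀, x⟩, ⟨i₀, y⟩) :=
    (h u hu v hv huv hfst).resolve_left fun hab => hbuv (hab ▸ Sym2.mem_mk_right a b)
  have mem_S : ∀ z ∈ s(⟨i₀, x⟩, ⟨i₀, y⟩), z ∈ S := by
    rw [← huv₀]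
    intro z hz
    rcases Sym2.mem_iff.1 hz with rfl | rfl <;> assumption
  obtain ⟨u', hu', v', hv', huv', hfst', hux, hvx⟩ :=
    exists_ne_fst_eq_of_card_lt (hS {⟨i₀, x⟩} (card_singleton _)) fun _ _ => mem_univ _
  have hab : s(u', v') = s(a, b) := (h u' hu' v' hv' huv' hfst').resolve_right fun h₀ => by
    have := h₀ ▸ Sym2.mem_mk_left (⟨i₀, x⟩ : Σ i, α i) ⟨i₀, y⟩
    simp_all [Sym2.mem_iff]
  refine ⟨mem_S _ (Sym2.mem_mk_left _ _), mem_S _ (Sym2.mem_mk_right _ _), huv₀ ▸ hbuv, ?_⟩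
  rcases Sym2.eq_iff.1 hab with ⟨rfl, rfl⟩ | ⟨rfl, rfl⟩
  exacts [hfst', hfst'.symm]

lemma SamePartPairsIn.card_partFiber_of_ne (hcard : #S = Fintype.card ι + 2)
    (h : SamePartPairsIn S s(a, b) s(⟨i₀, x⟩, ⟨i₀, y⟩)) (hab : a.1 = b.1) {j : ι}
    (hj₀ : j ≠ i₀) (hja : j ≠ a.1) : #(partFiber S j) = 1 := by
  refine le_antisymm (card_le_one.2 fun c hc c' hc' => ?_) (card_pos.2 ?_)
  · by_contra hcc'
    rcases h.mem_or_mem (mem_partFiber.1 hc) (mem_partFiber.1 hc') (by simpa using hcc') rfl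
      with ⟨hca, -⟩ | ⟨hc₀, -⟩
    exacts [hja (Sigma.fst_eq_of_mem_mk hca hab), hj₀ (Sigma.fst_eq_of_mem_mk hc₀ rfl)]
  · by_contra hempty
    have hS : ∀ v ∈ S, v.1 ∈ univ.erase j := by
      rintro ⟨j', c⟩ hv
      refine mem_erase.2 ⟨fun hj => hempty ?_, mem_univ _⟩
      subst hj
      exact ⟨c, mem_partFiber.2 hv⟩
    have hK : #(univ.erase j) + #({b, ⟨i₀, x⟩} : Finset (Σ i, α i)) < #S := by
      have := card_erase_lt_of_mem (mem_univ j)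
      have := card_le_two (a := b) (b := ⟨i₀, x⟩)
      simp only [card_univ] at *
      omega
    obtain ⟨u, hu, v, hv, huv, hfst, huT, hvT⟩ := exists_ne_fst_eq_of_card_lt hK hS
    rcases h u hu v hv huv hfst with hp | hp
    · have := hp ▸ Sym2.mem_mk_right a b
      simp_all
    · have := hp ▸ Sym2.mem_mk_left (⟨i₀, x⟩ : Σ i, α i) ⟨i₀, y⟩
      simp_all

variable [∀ i, Fintype (α i)]

variable (i₀ x y) in
/-- The fibres `g j = S ∩ V_j` of the vertex sets `S = univ.sigma g` of the copies of
`K_{r+2} − e` whose non-edge lies in the part `i`. -/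
def copyFibers (i : ι) : Finset (∀ j, Finset (α j)) :=
  Fintype.piFinset <| Function.update
    (fun j => if j = i then powersetCard 2 univ else powersetCard 1 univ) i₀ {{x, y}}

lemma mem_copyFibers {i : ι} {g : ∀ j, Finset (α j)} :
    g ∈ copyFibers i₀ x y i ↔ g i₀ = {x, y} ∧ ∀ j ≠ i₀, #(g j) = if j = i then 2 else 1 := by
  rw [copyFibers, Fintype.mem_piFinset,
    Function.forall_update_iff _ fun j (t : Finset (Finset (α j))) => g j ∈ t]
  refine and_congr mem_singleton (forall₂_congr fun j _ => ?_)
  split_ifs <;> simp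

lemma card_copyFibers {i : ι} (hi : i ≠ i₀) :
    #(copyFibers i₀ x y i) = (Fintype.card (α i)).choose 2 *
      ∏ j ∈ (univ.erase i₀).erase i, Fintype.card (α j) := by
  rw [copyFibers, Fintype.card_piFinset, ← mul_prod_erase univ _ (mem_univ i₀),
    Function.update_self, card_singleton, one_mul,
    ← mul_prod_erase _ _ (mem_erase.2 ⟨hi, mem_univ i⟩), Function.update_of_ne hi, if_pos rfl,
    card_powersetCard, card_univ]
  congr 1
  refine prod_congr rfl fun j hj => ?_
  obtain ⟨hji, hj₀⟩ : j ≠ i ∧ j ≠ i₀ := by simpa using hj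
  rw [Function.update_of_ne hj₀, if_neg hji, card_powersetCard, card_univ, Nat.choose_one_right]

lemma card_sigma_of_mem_copyFibers (hxy : x ≠ y) {i : ι} (hi : i ≠ i₀)
    {g : ∀ j, Finset (α j)} (hg : g ∈ copyFibers i₀ x y i) :
    #(univ.sigma g) = Fintype.card ι + 2 := by
  obtain ⟨hg₀, hcard⟩ := mem_copyFibers.1 hg
  have hcard' : ∀ j, #(g j) = 1 + (if j = i₀ then 1 else 0) + (if j = i then 1 else 0) := by
    intro j
    by_cases hj₀ : j = i₀
    · subst hj₀
      simp [hg₀, card_pair hxy, hi.symm]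
    · rw [hcard j hj₀]
      split_ifs <;> simp
  simp [card_sigma, hcard', sum_add_distrib]

lemma samePartPairsIn_sigma_of_mem_copyFibers {i : ι} {g : ∀ j, Finset (α j)}
    (hg : g ∈ copyFibers i₀ x y i) {c₀ c₁ : α i} (hgi : g i = {c₀, c₁}) :
    SamePartPairsIn (univ.sigma g) s(⟨i, c₀⟩, ⟨i, c₁⟩) s(⟨i₀, x⟩, ⟨i₀, y⟩) := by
  obtain ⟨hg₀, hcard⟩ := mem_copyFibers.1 hg
  rintro ⟨j, c⟩ hc ⟨j', c'⟩ hc' hne (rfl : j = j')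
  simp only [mem_sigma, mem_univ, true_and] at hc hc'
  have hcc' : c ≠ c' := by simpa using hne
  have pair_eq : ∀ {p q : α j}, g j = {p, q} →
      s((⟨j, c⟩ : Σ i, α i), ⟨j, c'⟩) = s(⟨j, p⟩, ⟨j, q⟩) :=
    fun hpq => (Sym2.mk_eq_mk_iff_of_injective sigma_mk_injective).2
      (Sym2.mk_eq_of_mem_pair (hpq ▸ hc) (hpq ▸ hc') hcc')
  by_cases hj₀ : j = i₀
  · subst hj₀
    exact Or.inr (pair_eq hg₀)
  by_cases hji : j = i
  · subst hji
    exact Or.inl (pair_eq hgi)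
  · exact absurd (card_le_one.1 (by rw [hcard j hj₀, if_neg hji]) c hc c' hc') hcc'

lemma SamePartPairsIn.partFiber_mem_copyFibers (hxy : x ≠ y) (hcard : #S = Fintype.card ι + 2)
    (ha : a ∈ S) (hb : b ∈ S) (hab : a ≠ b) (h : SamePartPairsIn S s(a, b) s(⟨i₀, x⟩, ⟨i₀, y⟩)) :
    a.1 = b.1 ∧ a.1 ≠ i₀ ∧ partFiber S ∈ copyFibers i₀ x y a.1 := by
  obtain ⟨hx, hy, hbxy, hab1⟩ := h.of_card hcard hb
  have ha₀ := h.fst_ne hxy hb hx hy hbxy hab1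
  refine ⟨hab1, ha₀, mem_copyFibers.2 ⟨h.partFiber_base hx hy hab1 ha₀, fun j hj₀ => ?_⟩⟩
  split_ifs with hja
  · exact hja ▸ h.card_partFiber_self ha hb hab hab1 ha₀
  · exact h.card_partFiber_of_ne hcard hab1 hj₀ hja

lemma pairwiseDisjoint_copyFibers :
    (↑(univ.erase i₀) : Set ι).PairwiseDisjoint (copyFibers i₀ x y) := by
  intro i hi i' _ hii'
  refine disjoint_left.2 fun g hg hg' => ?_
  have hcard := (mem_copyFibers.1 hg).2 i (ne_of_mem_erase hi)
  have hcard' := (mem_copyFibers.1 hg').2 i (ne_of_mem_erase hi)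
  simp_all

theorem setOf_iso_cliqueMinusEdge_eq_image (hxy : x ≠ y) :
    {H' : (completeMultipartitePlusEdge α i₀ x y).Subgraph |
        Nonempty (H'.coe ≃g cliqueMinusEdge (Fintype.card ι))} =
      (fun g => (⊤ : (completeMultipartitePlusEdge α i₀ x y).Subgraph).induce ↑(univ.sigma g)) ''
        ((univ.erase i₀).biUnion (copyFibers i₀ x y) : Set (∀ j, Finset (α j))) := by
  ext H'
  rw [Set.mem_ofPred_eq, SimpleGraph.Subgraph.nonempty_iso_cliqueMinusEdge_iff, coe_biUnion]
  simp only [Set.mem_image, Set.mem_iUnion, mem_coe, mem_erase, ne_eq, mem_univ, and_true,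
    exists_prop]
  constructor
  · rintro ⟨S, hverts, hcard, a, ha, b, hb, hab, hadj⟩
    have h : SamePartPairsIn S s(a, b) s(⟨i₀, x⟩, ⟨i₀, y⟩) := samePartPairsIn_of_adj
      fun u hu v hv huv hM => H'.adj_sub ((hadj u hu v hv).2 ⟨huv, hM⟩)
    obtain ⟨hab1, ha₀, hmem⟩ := h.partFiber_mem_copyFibers hxy hcard ha hb hab
    refine ⟨partFiber S, ⟨a.1, ha₀, hmem⟩, ?_⟩
    rw [sigma_partFiber, ← hverts]
    refine SimpleGraph.Subgraph.IsInduced.induce_top_verts fun u hu v hv huv => ?_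
    rw [hverts, mem_coe] at hu hv
    exact (hadj u hu v hv).2 ((h.adj_iff hab1 ha₀ hu hv).1 huv)
  · rintro ⟨g, ⟨i, hi, hg⟩, rfl⟩
    obtain ⟨c₀, c₁, hc, hgi⟩ := card_eq_two.1 (by simpa [hi] using (mem_copyFibers.1 hg).2 i hi)
    have h := samePartPairsIn_sigma_of_mem_copyFibers hg hgi
    refine ⟨univ.sigma g, rfl, card_sigma_of_mem_copyFibers hxy hi hg, ⟨i, c₀⟩, by simp [hgi],
      ⟨i, c₁⟩, by simp [hgi], by simpa using hc, fun u hu v hv => ?_⟩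
    rw [SimpleGraph.Subgraph.induce_adj, SimpleGraph.Subgraph.top_adj, mem_coe, mem_coe,
      h.adj_iff rfl hi hu hv]
    exact ⟨fun huv => huv.2.2, fun huv => ⟨hu, hv, huv⟩⟩

end SamePartPairsIn

theorem copyCount_cliqueMinusEdge_completeMultipartitePlusEdge [Fintype ι] [DecidableEq ι]
    [∀ i, Fintype (α i)] [∀ i, DecidableEq (α i)] (hxy : x ≠ y) :
    copyCount (cliqueMinusEdge (Fintype.card ι)) (completeMultipartitePlusEdge α i₀ x y) =
      ∑ i ∈ univ.erase i₀,
        (Fintype.card (α i)).choose 2 * ∏ j ∈ (univ.erase i₀).erase i, Fintype.card (α j) := by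
  rw [copyCount, setOf_iso_cliqueMinusEdge_eq_image hxy,
    Set.ncard_image_of_injective _ induce_sigma_injective, Set.ncard_coe_finset,
    card_biUnion pairwiseDisjoint_copyFibers]
  exact sum_congr rfl fun i hi => card_copyFibers (ne_of_mem_erase hi)

end CompleteMultipartitePlusEdge

theorem copies_cliqueMinusEdge_turanPlus_general (r : ℕ) (n : Fin r → ℕ)
    (i0 : Fin r)
    (x y : Fin (n i0)) (hxy : x ≠ y)
    (H : SimpleGraph (Σ i : Fin r, Fin (n i)))
    (hH : H = SimpleGraph.completeMultipartiteGraph (fun i => Fin (n i)) ⊔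
      SimpleGraph.fromEdgeSet {s((⟨i0, x⟩ : Σ i : Fin r, Fin (n i)), ⟨i0, y⟩)}) :
    copyCount (cliqueMinusEdge r) H =
      ∑ i ∈ univ.erase i0,
        (n i).choose 2 * ∏ j ∈ (univ.erase i0).erase i, n j := by
  subst hH
  have h := copyCount_cliqueMinusEdge_completeMultipartitePlusEdge (α := fun i => Fin (n i)) hxy
  rw [Fintype.card_fin] at h
  simp only [Fintype.card_fin] at h
  exact h

/-- For `r ≥ 2` and `F = K_{r+2} − e`, the number of copies of `F` in the graph obtained
from the complete `r`-partite graph with parts of sizes `n 0, …, n (r-1)` by adding one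
edge inside the first part equals `∑_{i≠0} C(n i, 2) · ∏_{j≠0, j≠i} n j`. -/
theorem copies_cliqueMinusEdge_turanPlus (r : ℕ) (hr : 2 ≤ r) (n : Fin r → ℕ)
    (i0 : Fin r) (hi0 : (i0 : ℕ) = 0)
    (x y : Fin (n i0)) (hxy : x ≠ y)
    (H : SimpleGraph (Σ i : Fin r, Fin (n i)))
    (hH : H = SimpleGraph.completeMultipartiteGraph (fun i => Fin (n i)) ⊔
      SimpleGraph.fromEdgeSet {s((⟨i0, x⟩ : Σ i : Fin r, Fin (n i)), ⟨i0, y⟩)}) :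
    copyCount (cliqueMinusEdge r) H =
      ∑ i ∈ univ.erase i0,
        (n i).choose 2 * ∏ j ∈ (univ.erase i0).erase i, n j :=
  copies_cliqueMinusEdge_turanPlus_general r n i0 x y hxy H hH
end

section
/- For s, t ≥ 2 and F = K_{s,t}⁺ (the complete bipartite graph K_{s,t} with one extra edge added inside the part of size s), the number of copies of F in the graph obtained from the complete bipartite graph with parts of sizes n₁ and n₂ by adding one edge inside the first part equals C(n₂, t) · C(n₁ − 2, s − 2). -/
/-- `K_{s,t}⁺`: the complete bipartite graph `K_{s,t}` with one extra edge added
inside the part of size `s`. -/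
def Kst_plus (s t : ℕ) (a b : Fin s) : SimpleGraph (Fin s ⊕ Fin t) :=
  completeBipartiteGraph (Fin s) (Fin t) ⊔
    SimpleGraph.fromEdgeSet {s(Sum.inl a, Sum.inl b)}

/-!
In `K(V₁, V₂) + xy` every triangle is `x y w` with `w ∈ V₂`. Every right vertex of a copy
of `K_{s,t}⁺` closes a triangle on the image of the edge `ab`, and so does any other right
vertex (`t ≥ 2`), so the copy sends right vertices into `V₂`, hence left vertices into `V₁`,
and `ab` onto `xy`. Such a copy is an induced subgraph, so it is determined by its vertex set
`S ∪ T` with `{x, y} ⊆ S ⊆ V₁`, `|S| = s` and `T ⊆ V₂`, `|T| = t`; conversely every such set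
spans a copy.
-/

open Function Finset Sum

lemma Equiv.Perm.exists_apply_eq_apply_eq {γ : Type*} {a b a' b' : γ} (hab : a ≠ b)
    (hab' : a' ≠ b') : ∃ σ : Equiv.Perm γ, σ a = a' ∧ σ b = b' := by
  classical
  set σ₁ := Equiv.swap a a'
  have hσ₁ : σ₁ b ≠ a' := by
    rw [← Equiv.swap_apply_left a a']
    exact σ₁.injective.ne hab.symm
  refine ⟨σ₁.trans (Equiv.swap (σ₁ b) b'), ?_, by simp⟩
  rw [Equiv.trans_apply, Equiv.swap_apply_left, Equiv.swap_apply_of_ne_of_ne hσ₁.symm hab']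

lemma Finset.exists_embedding_map_univ_eq {γ α : Type*} [Fintype γ] {S : Finset α}
    (hS : #S = Fintype.card γ) : ∃ f : γ ↪ α, univ.map f = S := by
  obtain ⟨e⟩ : Nonempty (γ ≃ S) := ⟨Fintype.equivOfCardEq (by simp [hS])⟩
  refine ⟨e.toEmbedding.trans (Embedding.subtype _), ?_⟩
  ext u
  simp only [mem_map, mem_univ, true_and, Embedding.trans_apply, Equiv.coe_toEmbedding,
    Embedding.subtype_apply]
  exact ⟨fun ⟨c, hc⟩ ↦ hc ▸ (e c).2, fun hu ↦ ⟨e.symm ⟨u, hu⟩, by simp⟩⟩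

lemma Finset.exists_embedding_map_univ_eq_of_mem {γ α : Type*} [Fintype γ] {S : Finset α}
    (hS : #S = Fintype.card γ) {a b : γ} (hab : a ≠ b) {x y : α} (hxy : x ≠ y) (hx : x ∈ S)
    (hy : y ∈ S) : ∃ f : γ ↪ α, univ.map f = S ∧ f a = x ∧ f b = y := by
  obtain ⟨f, rfl⟩ := exists_embedding_map_univ_eq hS
  obtain ⟨a', -, rfl⟩ := mem_map.mp hx
  obtain ⟨b', -, rfl⟩ := mem_map.mp hy
  obtain ⟨σ, hσa, hσb⟩ := Equiv.Perm.exists_apply_eq_apply_eq hab (f.injective.ne_iff.mp hxy)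
  exact ⟨σ.toEmbedding.trans f, by simp [← map_map], by simp [hσa], by simp [hσb]⟩

lemma range_sumMap_eq_coe_disjSum {α β γ δ : Type*} [Fintype γ] [Fintype δ]
    (f₁ : γ ↪ α) (f₂ : δ ↪ β) :
    Set.range (Sum.map f₁ f₂) = ↑((univ.map f₁).disjSum (univ.map f₂)) := by
  ext (u | w) <;> simp

namespace SimpleGraph

section Copies

variable {V W : Type*} {A : SimpleGraph V} {B : SimpleGraph W}

lemma Embedding.toCopy_toSubgraph (f : A ↪g B) :
    f.toCopy.toSubgraph = (⊤ : B.Subgraph).induce (Set.range f) := by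
  ext v w
  · simp
  · simp only [Subgraph.map_adj, Subgraph.top_adj, Subgraph.induce_adj, Relation.map_apply]
    constructor
    · rintro ⟨p, q, hpq, rfl, rfl⟩
      exact ⟨⟨p, rfl⟩, ⟨q, rfl⟩, f.map_adj_iff.mpr hpq⟩
    · rintro ⟨⟨p, rfl⟩, ⟨q, rfl⟩, h⟩
      exact ⟨p, q, f.map_adj_iff.mp h, rfl, rfl⟩

lemma setOf_nonempty_iso_eq_image_induce (h : ∀ f : Copy A B, ∃ g : A ↪g B, g.toCopy = f) :
    {B' : B.Subgraph | Nonempty (B'.coe ≃g A)} =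
      (fun s ↦ (⊤ : B.Subgraph).induce s) '' {s | ∃ g : A ↪g B, Set.range g = s} := by
  have hsurj : Surjective (Embedding.toCopy (A := A) (B := B)) := h
  calc {B' : B.Subgraph | Nonempty (B'.coe ≃g A)}
      = Set.range (Copy.toSubgraph (A := A)) := by
        rw [Copy.range_toSubgraph]
        exact Set.ext fun _ ↦ ⟨fun ⟨e⟩ ↦ ⟨e.symm⟩, fun ⟨e⟩ ↦ ⟨e.symm⟩⟩
    _ = Set.range fun g : A ↪g B ↦ g.toCopy.toSubgraph := (hsurj.range_comp _).symm
    _ = _ := by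
        simp only [Embedding.toCopy_toSubgraph]
        ext
        simp

end Copies

section BipartitePlus

def bipartitePlus (α β : Type*) (x y : α) : SimpleGraph (α ⊕ β) :=
  completeBipartiteGraph α β ⊔ edge (inl x) (inl y)

variable {α β γ δ : Type*} {x y : α}

@[simp] lemma bipartitePlus_adj_inl_inl {u v : α} :
    (bipartitePlus α β x y).Adj (inl u) (inl v) ↔ s(u, v) = s(x, y) ∧ u ≠ v := by
  simp [bipartitePlus, edge_adj]

@[simp] lemma bipartitePlus_adj_inl_inr {u : α} {w : β} :
    (bipartitePlus α β x y).Adj (inl u) (inr w) := by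
  simp [bipartitePlus]

@[simp] lemma bipartitePlus_adj_inr_inl {u : α} {w : β} :
    (bipartitePlus α β x y).Adj (inr w) (inl u) := by
  simp [bipartitePlus]

@[simp] lemma bipartitePlus_not_adj_inr_inr {w w' : β} :
    ¬ (bipartitePlus α β x y).Adj (inr w) (inr w') := by
  simp [bipartitePlus, edge_adj]

/-- Every triangle of `bipartitePlus α β x y` is `x y w` with `w` on the right, so two distinct
vertices completing the same edge to a triangle both lie on the right. -/
lemma isRight_of_adj_bipartitePlus {u v w w' : α ⊕ β}
    (huv : (bipartitePlus α β x y).Adj u v)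
    (huw : (bipartitePlus α β x y).Adj u w) (hvw : (bipartitePlus α β x y).Adj v w)
    (huw' : (bipartitePlus α β x y).Adj u w') (hvw' : (bipartitePlus α β x y).Adj v w')
    (hne : w ≠ w') : w.isRight := by
  rcases u with u | u <;> rcases v with v | v <;> rcases w with w | w <;>
    rcases w' with w' | w' <;> simp_all <;> grind

lemma Copy.exists_eq_sumMap_of_bipartitePlus [Nontrivial δ] {a b : γ} (hab : a ≠ b)
    (f : Copy (bipartitePlus γ δ a b) (bipartitePlus α β x y)) :
    ∃ (f₁ : γ → α) (f₂ : δ → β), ⇑f = Sum.map f₁ f₂ := by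
  have adj : ∀ {p q}, (bipartitePlus γ δ a b).Adj p q →
      (bipartitePlus α β x y).Adj (f p) (f q) := f.toHom.map_adj
  have hright : ∀ r, ∃ w, f (inr r) = inr w := by
    intro r
    obtain ⟨r', hr'⟩ := exists_ne r
    exact isRight_iff.mp <| isRight_of_adj_bipartitePlus
      (adj (bipartitePlus_adj_inl_inl.mpr ⟨rfl, hab⟩)) (adj bipartitePlus_adj_inl_inr)
      (adj bipartitePlus_adj_inl_inr) (adj (bipartitePlus_adj_inl_inr (w := r')))
      (adj bipartitePlus_adj_inl_inr) (f.injective.ne (by simpa using hr'.symm))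
  have hleft : ∀ i, ∃ u, f (inl i) = inl u := by
    intro i
    obtain ⟨r⟩ := ‹Nontrivial δ›.to_nonempty
    obtain ⟨w, hw⟩ := hright r
    have := adj (bipartitePlus_adj_inl_inr (u := i) (w := r))
    rcases hfi : f (inl i) with u | w'
    · exact ⟨u, rfl⟩
    · simp [hfi, hw] at this
  choose f₁ hf₁ using hleft
  choose f₂ hf₂ using hright
  exact ⟨f₁, f₂, funext fun | inl i => hf₁ i | inr r => hf₂ r⟩

def bipartitePlusEmbedding {a b : γ} (f₁ : γ ↪ α) (f₂ : δ ↪ β)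
    (h : s(f₁ a, f₁ b) = s(x, y)) :
    bipartitePlus γ δ a b ↪g bipartitePlus α β x y where
  toEmbedding := f₁.sumMap f₂
  map_rel_iff' {p q} := by
    rcases p with i | r <;> rcases q with j | r' <;>
      simp only [Embedding.sumMap, Embedding.coeFn_mk, Sum.map_inl, Sum.map_inr,
        bipartitePlus_adj_inl_inl, bipartitePlus_adj_inl_inr, bipartitePlus_adj_inr_inl,
        bipartitePlus_not_adj_inr_inr]
    rw [← h, ← Sym2.map_mk, ← Sym2.map_mk, (Sym2.map.injective f₁.injective).eq_iff,
      f₁.injective.ne_iff]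

lemma Copy.exists_eq_bipartitePlusEmbedding [Nontrivial δ] {a b : γ} (hab : a ≠ b)
    (f : Copy (bipartitePlus γ δ a b) (bipartitePlus α β x y)) :
    ∃ (f₁ : γ ↪ α) (f₂ : δ ↪ β) (h : s(f₁ a, f₁ b) = s(x, y)),
      (bipartitePlusEmbedding f₁ f₂ h).toCopy = f := by
  obtain ⟨f₁, f₂, hf⟩ := f.exists_eq_sumMap_of_bipartitePlus hab
  obtain ⟨hf₁, hf₂⟩ := Sum.map_injective.mp (hf ▸ f.injective)
  have hab' := f.toHom.map_adj (bipartitePlus_adj_inl_inl.mpr ⟨rfl, hab⟩)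
  rw [Copy.coe_toHom, hf, Sum.map_inl, Sum.map_inl, bipartitePlus_adj_inl_inl] at hab'
  exact ⟨⟨f₁, hf₁⟩, ⟨f₂, hf₂⟩, hab'.1, Copy.ext fun p ↦ (congrFun hf p).symm⟩

theorem setOf_range_embedding_bipartitePlus [Fintype α] [Fintype β] [Fintype γ] [Fintype δ]
    [DecidableEq α] [Nontrivial δ] {a b : γ} (hab : a ≠ b) (hxy : x ≠ y) :
    {s | ∃ g : bipartitePlus γ δ a b ↪g bipartitePlus α β x y, Set.range g = s} =
      (fun p : Finset α × Finset β ↦ (↑(p.1.disjSum p.2) : Set (α ⊕ β))) ''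
        ↑((univ.powersetCard (Fintype.card γ)).filter ({x, y} ⊆ ·) ×ˢ
          univ.powersetCard (Fintype.card δ) : Finset (Finset α × Finset β)) := by
  ext s
  constructor
  · rintro ⟨g, rfl⟩
    obtain ⟨f₁, f₂, h, hg⟩ := g.toCopy.exists_eq_bipartitePlusEmbedding hab
    have hxy_sub : {x, y} ⊆ univ.map f₁ := by
      rcases Sym2.eq_iff.mp h with ⟨hx, hy⟩ | ⟨hy, hx⟩ <;>
        simp [insert_subset_iff, ← hx, ← hy]
    refine ⟨(univ.map f₁, univ.map f₂), by simpa [mem_powersetCard] using hxy_sub, ?_⟩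
    dsimp only
    rw [← range_sumMap_eq_coe_disjSum]
    exact congrArg Set.range (congrArg DFunLike.coe hg)
  · rintro ⟨⟨S, T⟩, hST, rfl⟩
    simp only [coe_product, Set.mem_prod, mem_coe, mem_filter, mem_powersetCard, subset_univ,
      true_and, insert_subset_iff, singleton_subset_iff] at hST
    obtain ⟨⟨hS, hx, hy⟩, hT⟩ := hST
    obtain ⟨f₁, rfl, rfl, rfl⟩ := exists_embedding_map_univ_eq_of_mem hS hab hxy hx hy
    obtain ⟨f₂, rfl⟩ := exists_embedding_map_univ_eq hT
    exact ⟨bipartitePlusEmbedding f₁ f₂ rfl, range_sumMap_eq_coe_disjSum f₁ f₂⟩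

end BipartitePlus

end SimpleGraph

theorem copyCount_bipartitePlus {α β γ δ : Type*} [Fintype α] [Fintype β] [Fintype γ]
    [Fintype δ] [DecidableEq α] [Nontrivial δ] {a b : γ} {x y : α} (hab : a ≠ b) (hxy : x ≠ y) :
    copyCount (SimpleGraph.bipartitePlus γ δ a b) (SimpleGraph.bipartitePlus α β x y) =
      (Fintype.card β).choose (Fintype.card δ) *
        (Fintype.card α - 2).choose (Fintype.card γ - 2) := by
  have hinduce : Injective fun s : Set (α ⊕ β) ↦
      (⊤ : (SimpleGraph.bipartitePlus α β x y).Subgraph).induce s :=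
    fun s t hst ↦ by simpa using congrArg SimpleGraph.Subgraph.verts hst
  have hdisjSum : Injective fun p : Finset α × Finset β ↦ (↑(p.1.disjSum p.2) : Set (α ⊕ β)) :=
    fun p q hpq ↦ Prod.ext_iff.mpr (disjSum_inj.mp (coe_inj.mp hpq))
  have hpair : #{x, y} ≤ Fintype.card γ := by
    have : Nontrivial γ := ⟨a, b, hab⟩
    rw [card_pair hxy]
    exact Fintype.one_lt_card
  rw [copyCount, SimpleGraph.setOf_nonempty_iso_eq_image_induce fun f ↦
      (f.exists_eq_bipartitePlusEmbedding hab).elim fun _ ⟨_, _, hf⟩ ↦ ⟨_, hf⟩,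
    Set.ncard_image_of_injective _ hinduce,
    SimpleGraph.setOf_range_embedding_bipartitePlus hab hxy,
    Set.ncard_image_of_injective _ hdisjSum, Set.ncard_coe_finset, card_product,
    card_filter_powersetCard_subset _ _ _ (subset_univ _) hpair, card_powersetCard, card_univ,
    card_univ, card_pair hxy, mul_comm]

theorem copies_KstPlus_bipartitePlus_general (s t : ℕ) (ht : 2 ≤ t)
    (a b : Fin s) (hab : a ≠ b)
    (n₁ n₂ : ℕ)
    (x y : Fin n₁) (hxy : x ≠ y)
    (H : SimpleGraph (Fin n₁ ⊕ Fin n₂))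
    (hH : H = completeBipartiteGraph (Fin n₁) (Fin n₂) ⊔
      SimpleGraph.fromEdgeSet {s(Sum.inl x, Sum.inl y)}) :
    copyCount (Kst_plus s t a b) H = n₂.choose t * (n₁ - 2).choose (s - 2) := by
  have : Nontrivial (Fin t) := Fin.nontrivial_iff_two_le.mpr ht
  subst hH
  exact (copyCount_bipartitePlus (β := Fin n₂) (δ := Fin t) hab hxy).trans
    (by simp only [Fintype.card_fin])

/-- For `s, t ≥ 2`, the number of copies of `K_{s,t}⁺` in the graph obtained from the
complete bipartite graph with parts of sizes `n₁, n₂` by adding one edge inside the first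
part equals `C(n₂, t) · C(n₁ − 2, s − 2)`. -/
theorem copies_KstPlus_bipartitePlus (s t : ℕ) (hs : 2 ≤ s) (ht : 2 ≤ t)
    (a b : Fin s) (hab : a ≠ b)
    (n₁ n₂ : ℕ) (hn₁ : 2 ≤ n₁)
    (x y : Fin n₁) (hxy : x ≠ y)
    (H : SimpleGraph (Fin n₁ ⊕ Fin n₂))
    (hH : H = completeBipartiteGraph (Fin n₁) (Fin n₂) ⊔
      SimpleGraph.fromEdgeSet {s(Sum.inl x, Sum.inl y)}) :
    copyCount (Kst_plus s t a b) H = n₂.choose t * (n₁ - 2).choose (s - 2) :=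
  copies_KstPlus_bipartitePlus_general s t ht a b hab n₁ n₂ x y hxy H hH
end

section
/- Let r ≥ 2 and consider the function P(ξ₁,…,ξ_r) = (1/2)(∑_{i=1}^r ξ_i) ∏_{i=1}^r ξ_i on the domain S_ρ = {ξ ∈ ℝ^r : 0 ≤ ξ_i ≤ 1/r for all i, ∑ ξ_i = ρ} with (r−1)/r < ρ ≤ 1. Then the minimum of P over S_ρ is attained at the point (ρ − (r−1)/r, 1/r, …, 1/r) (up to permutation of coordinates). -/
/-!
Rescaling by `r`, the constraint becomes `y i = r * ξ i ∈ [0, 1]`, and Weierstrass' product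
inequality `1 - ∑ (1 - y i) ≤ ∏ y i` bounds `∏ ξ i` from below by a quantity depending only on
`∑ ξ i = ρ`. The corner point attains that bound with equality, and `P = (ρ / 2) * ∏ ξ i` on `S_ρ`.
-/

open Finset

variable {ι : Type*}

namespace Finset

theorem one_sub_sum_one_sub_le_prod {R : Type*} [CommRing R] [PartialOrder R] [IsOrderedRing R]
    (s : Finset ι) {y : ι → R} (h0 : ∀ i ∈ s, 0 ≤ y i) (h1 : ∀ i ∈ s, y i ≤ 1) :
    1 - ∑ i ∈ s, (1 - y i) ≤ ∏ i ∈ s, y i := by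
  induction s using Finset.cons_induction with
  | empty => simp
  | cons a s ha ih =>
    rw [sum_cons, prod_cons]
    have hT : 0 ≤ ∑ i ∈ s, (1 - y i) :=
      sum_nonneg fun i hi => sub_nonneg.2 (h1 i (mem_cons_of_mem hi))
    have ih := ih (fun i hi => h0 i (mem_cons_of_mem hi)) fun i hi => h1 i (mem_cons_of_mem hi)
    calc 1 - ((1 - y a) + ∑ i ∈ s, (1 - y i))
        ≤ y a * (1 - ∑ i ∈ s, (1 - y i)) := by
          rw [← sub_nonneg]
          convert mul_nonneg hT (sub_nonneg.2 (h1 a (mem_cons_self a s))) using 1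
          ring
      _ ≤ y a * ∏ i ∈ s, y i := mul_le_mul_of_nonneg_left ih (h0 a (mem_cons_self a s))

end Finset

namespace Fintype

@[to_additive]
theorem prod_ite_eq_const {M : Type*} [CommMonoid M] [Fintype ι] [DecidableEq ι] (i₀ : ι)
    (a b : M) : ∏ i, (if i = i₀ then a else b) = a * b ^ (card ι - 1) := by
  rw [← mul_prod_erase univ _ (mem_univ i₀), if_pos rfl,
    Finset.prod_congr rfl fun i hi => if_neg (ne_of_mem_erase hi), prod_const,
    card_erase_of_mem (mem_univ i₀), card_univ]

theorem sum_sub_card_mul_pow_le_prod {K : Type*} [Field K] [LinearOrder K]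
    [IsStrictOrderedRing K] [Fintype ι] [Nonempty ι] {c : K} (hc : 0 < c) {x : ι → K}
    (hx : ∀ i, 0 ≤ x i ∧ x i ≤ c) :
    (∑ i, x i - (card ι - 1 : K) * c) * c ^ (card ι - 1) ≤ ∏ i, x i := by
  obtain ⟨n, hn⟩ : ∃ n, card ι = n + 1 := Nat.exists_eq_add_one_of_ne_zero card_ne_zero
  have hW := one_sub_sum_one_sub_le_prod univ (y := fun i => x i / c)
    (fun i _ => div_nonneg (hx i).1 hc.le) (fun i _ => div_le_one_of_le₀ (hx i).2 hc.le)
  rw [prod_div_distrib, prod_const, card_univ, hn, le_div_iff₀ (pow_pos hc _), sum_sub_distrib,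
    ← sum_div, sum_const, card_univ, hn] at hW
  rw [hn, Nat.add_sub_cancel]
  convert hW using 1
  field_simp
  push_cast
  ring

end Fintype

theorem min_P_at_corner_general (r : ℕ) (ρ : ℝ)
    (hρ₁ : ((r : ℝ) - 1) / r < ρ) (hρ₂ : ρ ≤ 1)
    (P : (Fin r → ℝ) → ℝ)
    (hP : P = fun ξ => (1 / 2) * (∑ i, ξ i) * ∏ i, ξ i)
    (ξstar : Fin r → ℝ) (i0 : Fin r)
    (hξstar : ξstar = fun i => if i = i0 then ρ - ((r : ℝ) - 1) / r else 1 / r) :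
    ((∀ i, 0 ≤ ξstar i ∧ ξstar i ≤ 1 / r) ∧ ∑ i, ξstar i = ρ) ∧
      ∀ ξ : Fin r → ℝ, (∀ i, 0 ≤ ξ i ∧ ξ i ≤ 1 / r) → ∑ i, ξ i = ρ →
        P ξstar ≤ P ξ := by
  subst hP hξstar
  have : Nonempty (Fin r) := ⟨i0⟩
  have hr : (0 : ℝ) < r := Nat.cast_pos.2 i0.pos
  have hsum : ∑ i, (if i = i0 then ρ - ((r : ℝ) - 1) / r else 1 / r) = ρ := by
    rw [Fintype.sum_ite_eq_const, Fintype.card_fin, nsmul_eq_mul, Nat.cast_pred i0.pos]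
    field_simp
    ring
  refine ⟨⟨fun i => ?_, hsum⟩, fun ξ hξ hξρ => ?_⟩
  · have hsplit : ((r : ℝ) - 1) / r + 1 / r = 1 := by field_simp; ring
    dsimp only
    split_ifs
    · exact ⟨by linarith, by linarith⟩
    · exact ⟨by positivity, le_rfl⟩
  · have hcorner := Fintype.sum_sub_card_mul_pow_le_prod (one_div_pos.2 hr) hξ
    rw [hξρ, Fintype.card_fin, mul_one_div] at hcorner
    have hρ : 0 ≤ ρ := hξρ ▸ sum_nonneg fun i _ => (hξ i).1
    simp only [hsum, hξρ, Fintype.prod_ite_eq_const, Fintype.card_fin]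
    gcongr

/-- For `r ≥ 2` and `(r−1)/r < ρ ≤ 1`, the minimum of
`P(ξ) = (1/2)(∑ ξ_i) ∏ ξ_i` over
`S_ρ = {ξ ∈ [0, 1/r]^r : ∑ ξ_i = ρ}` is attained at `(ρ − (r−1)/r, 1/r, …, 1/r)`. -/
theorem min_P_at_corner (r : ℕ) (hr : 2 ≤ r) (ρ : ℝ)
    (hρ₁ : ((r : ℝ) - 1) / r < ρ) (hρ₂ : ρ ≤ 1)
    (P : (Fin r → ℝ) → ℝ)
    (hP : P = fun ξ => (1 / 2) * (∑ i, ξ i) * ∏ i, ξ i)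
    (ξstar : Fin r → ℝ) (i0 : Fin r) (hi0 : (i0 : ℕ) = 0)
    (hξstar : ξstar = fun i => if i = i0 then ρ - ((r : ℝ) - 1) / r else 1 / r) :
    ((∀ i, 0 ≤ ξstar i ∧ ξstar i ≤ 1 / r) ∧ ∑ i, ξstar i = ρ) ∧
      ∀ ξ : Fin r → ℝ, (∀ i, 0 ≤ ξ i ∧ ξ i ≤ 1 / r) → ∑ i, ξ i = ρ →
        P ξstar ≤ P ξ :=
  min_P_at_corner_general r ρ hρ₁ hρ₂ P hP ξstar i0 hξstar
end
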